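/- arXiv:1407.0602 — 5 statements merged into one kernel-verified Lean document; each statement's English description precedes it below -/
import Mathlib

section
/- The integral mean over the edge ξ=1 of the 5-node transition interpolant equals the integral mean over the same edge of the piecewise linear function that interpolates values u_2 at η=-1, u_5 at η=0, u_3 at η=1 and is linear on [-1,0] and [0,1]. Consequently, the jump of a function in the transition element space V_h across any 3-node edge has zero mean: ∫_e [w] ds = 0. -/
/-!
Both integrals equal `(u2 + u3) / 2 + u5`. The transition shape functions are quadratics whose
integrals over `[-1, 1]` are `1/2`, `1/2` and `1`, and the trapezoidal rule, exact on each linear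
piece of the refined trace, produces the same weights.
-/

open MeasureTheory intervalIntegral
open scoped Interval

theorem intervalIntegral.integral_quadratic (a b c p q : ℝ) :
    ∫ x in p..q, (a + b * x + c * x ^ 2) =
      a * (q - p) + b * (q ^ 2 - p ^ 2) / 2 + c * (q ^ 3 - p ^ 3) / 3 := by
  rw [integral_add, integral_add, integral_const, integral_const_mul, integral_const_mul,
    integral_id, integral_pow]
  · simp only [smul_eq_mul]
    ring
  all_goals exact Continuous.intervalIntegrable (by fun_prop) _ _

theorem intervalIntegral.integral_affine (a b p q : ℝ) :
    ∫ x in p..q, (a + b * x) = (q - p) * ((a + b * p) + (a + b * q)) / 2 := by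
  have h := integral_quadratic a b 0 p q
  simp only [zero_mul, add_zero, zero_div] at h
  rw [h]
  ring

section PiecewiseSplit

variable {α : Type*} {f g : ℝ → α} {p m q : ℝ}

theorem Set.eqOn_ite_le_left (hpm : p ≤ m) :
    EqOn f (fun x => if x ≤ m then f x else g x) (Ι p m) := by
  intro x hx
  rw [uIoc_of_le hpm] at hx
  simp only [hx.2, if_true]

theorem Set.eqOn_ite_le_right (hmq : m ≤ q) :
    EqOn g (fun x => if x ≤ m then f x else g x) (Ι m q) := by
  intro x hx
  rw [uIoc_of_le hmq] at hx
  simp only [not_le.2 hx.1, if_false]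

end PiecewiseSplit

section PiecewiseIntegral

variable {E : Type*} [NormedAddCommGroup E] {μ : Measure ℝ} {f g : ℝ → E} {p m q : ℝ}

theorem IntervalIntegrable.ite_le (hpm : p ≤ m) (hmq : m ≤ q)
    (hf : IntervalIntegrable f μ p m) (hg : IntervalIntegrable g μ m q) :
    IntervalIntegrable (fun x => if x ≤ m then f x else g x) μ p q :=
  (hf.congr (Set.eqOn_ite_le_left hpm)).trans (hg.congr (Set.eqOn_ite_le_right hmq))

theorem intervalIntegral.integral_ite_le [NormedSpace ℝ E] (hpm : p ≤ m) (hmq : m ≤ q)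
    (hf : IntervalIntegrable f μ p m) (hg : IntervalIntegrable g μ m q) :
    ∫ x in p..q, (if x ≤ m then f x else g x) ∂μ = (∫ x in p..m, f x ∂μ) + ∫ x in m..q, g x ∂μ := by
  rw [← integral_add_adjacent_intervals (hf.congr (Set.eqOn_ite_le_left hpm))
      (hg.congr (Set.eqOn_ite_le_right hmq)),
    integral_congr_ae (ae_of_all _ fun x hx => (Set.eqOn_ite_le_left hpm hx).symm),
    integral_congr_ae (ae_of_all _ fun x hx => (Set.eqOn_ite_le_right hmq hx).symm)]

end PiecewiseIntegral

/-- The integral mean over the edge `ξ = 1` of the 5-node transition interpolant equals the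
integral mean of the piecewise linear interpolant of the nodal values `u2, u5, u3` at
`η = -1, 0, 1`; consequently the jump across the 3-node edge has zero mean. -/
theorem transition_edge_mean_eq_piecewise_linear
    (u2 u3 u5 : ℝ)
    (vtr vpl : ℝ → ℝ)
    (hvtr : ∀ η, vtr η = u2 * ((1 - η) / 2 - (3/8) * (1 - η ^ 2))
        + u3 * ((1 + η) / 2 - (3/8) * (1 - η ^ 2))
        + u5 * ((3/4) * (1 - η ^ 2)))
    (hvpl : ∀ η, vpl η = if η ≤ 0 then u5 + (u5 - u2) * η else u5 + (u3 - u5) * η) :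
    (1 / 2) * (∫ η in (-1 : ℝ)..1, vtr η) = (1 / 2) * (∫ η in (-1 : ℝ)..1, vpl η) ∧
    (∫ η in (-1 : ℝ)..1, (vtr η - vpl η)) = 0 := by
  have hvtr_quadratic : vtr = fun η => (u2 / 8 + u3 / 8 + 3 / 4 * u5) + (u3 - u2) / 2 * η
      + (3 / 8 * u2 + 3 / 8 * u3 - 3 / 4 * u5) * η ^ 2 := by
    funext η
    rw [hvtr η]
    ring
  have hvpl_ite : vpl = fun η => if η ≤ 0 then u5 + (u5 - u2) * η else u5 + (u3 - u5) * η :=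
    funext hvpl
  have hleft : IntervalIntegrable (fun η => u5 + (u5 - u2) * η) volume (-1) 0 :=
    Continuous.intervalIntegrable (by fun_prop) _ _
  have hright : IntervalIntegrable (fun η => u5 + (u3 - u5) * η) volume 0 1 :=
    Continuous.intervalIntegrable (by fun_prop) _ _
  have hint_tr : ∫ η in (-1 : ℝ)..1, vtr η = (u2 + u3) / 2 + u5 := by
    rw [hvtr_quadratic, integral_quadratic]
    ring
  have hint_pl : ∫ η in (-1 : ℝ)..1, vpl η = (u2 + u3) / 2 + u5 := by
    rw [hvpl_ite, integral_ite_le (by norm_num) (by norm_num) hleft hright,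
      integral_affine, integral_affine]
    ring
  have hvtr_int : IntervalIntegrable vtr volume (-1) 1 := by
    rw [hvtr_quadratic]
    exact Continuous.intervalIntegrable (by fun_prop) _ _
  have hvpl_int : IntervalIntegrable vpl volume (-1) 1 := by
    rw [hvpl_ite]
    exact hleft.ite_le (by norm_num) (by norm_num) hright
  refine ⟨by rw [hint_tr, hint_pl], ?_⟩
  rw [integral_sub hvtr_int hvpl_int, hint_tr, hint_pl, sub_self]
end

section
/- For a shape-regular quadrilateral K satisfying h_K ≤ ϱ ρ_K with ϱ > 2, the ratio of the maximum to the minimum of the Jacobian J_K over the reference square is bounded: max J_K / min J_K < h_K²/(2ρ_K²) ≤ ϱ²/2. -/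
/-!
`J_K(ξ, η) = α + β ξ + γ η` is affine, so over the square its extreme values are taken at corners,
and at the corner mapped to `Z_i` it equals `|T_i| / 2`. Hence `max J_K ≤ h_K² / 4`, since
`2 |T_i| ≤ h_K²`. For the minimum, a disc of radius `r` inside a triangle `T` gives
`r · perimeter ≤ 2 |T|` (sum the distances from its centre to the three sides), while Heron's
formula and AM-GM give `perimeter² ≥ 12 √3 |T|`; together `|T| ≥ 3 √3 r²`, so
`min J_K ≥ 3 √3 ρ_K² / 8`. The ratio is then at most `2 h_K² / (3 √3 ρ_K²) < h_K² / (2 ρ_K²)`.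
-/

open Metric Set

/-- The diameter of the largest circle inscribed in a plane set. -/
noncomputable def inscribedDiameter (s : Set (EuclideanSpace ℝ (Fin 2))) : ℝ :=
  sSup {d : ℝ | 0 ≤ d ∧ ∃ c, Metric.closedBall c (d / 2) ⊆ s}

local notation "ℝ²" => EuclideanSpace ℝ (Fin 2)

/-- Twice the signed area of the triangle `ABC`, positive when `A, B, C` run counterclockwise. -/
def cross (A B C : ℝ²) : ℝ := (B 0 - A 0) * (C 1 - A 1) - (B 1 - A 1) * (C 0 - A 0)

lemma cross_rotate (A B C : ℝ²) : cross B C A = cross A B C := by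
  unfold cross; ring

lemma dist_eq_sqrt_fin_two (p q : ℝ²) : dist p q = √((p 0 - q 0) ^ 2 + (p 1 - q 1) ^ 2) := by
  simp [EuclideanSpace.dist_eq, Fin.sum_univ_two, Real.dist_eq, sq_abs]

lemma dist_sq_fin_two (p q : ℝ²) : dist p q ^ 2 = (p 0 - q 0) ^ 2 + (p 1 - q 1) ^ 2 := by
  rw [dist_eq_sqrt_fin_two, Real.sq_sqrt (by positivity)]

lemma abs_det_le_sqrt_mul_sqrt (u₀ u₁ w₀ w₁ : ℝ) :
    |u₀ * w₁ - u₁ * w₀| ≤ √(u₀ ^ 2 + u₁ ^ 2) * √(w₀ ^ 2 + w₁ ^ 2) := by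
  rw [← Real.sqrt_mul (by positivity)]
  exact Real.abs_le_sqrt (by nlinarith [sq_nonneg (u₀ * w₀ + u₁ * w₁)])

lemma abs_cross_le_dist_mul_dist (A B C : ℝ²) : |cross A B C| ≤ dist A B * dist A C := by
  simpa only [cross, dist_comm A, dist_eq_sqrt_fin_two] using
    abs_det_le_sqrt_mul_sqrt (B 0 - A 0) (B 1 - A 1) (C 0 - A 0) (C 1 - A 1)

lemma convexHull_triangle_subset_cross_nonneg {A B C : ℝ²} (h : 0 ≤ cross A B C) :
    convexHull ℝ {A, B, C} ⊆ {p | 0 ≤ cross A B p} := by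
  refine convexHull_min ?_ ?_
  · have hA : cross A B A = 0 := by unfold cross; ring
    have hB : cross A B B = 0 := by unfold cross; ring
    simp only [insert_subset_iff, singleton_subset_iff]
    exact ⟨hA.ge, hB.ge, h⟩
  · intro p hp q hq a b ha hb hab
    obtain rfl : b = 1 - a := by linarith
    have : cross A B (a • p + (1 - a) • q) = a * cross A B p + (1 - a) * cross A B q := by
      simp only [cross, PiLp.add_apply, PiLp.smul_apply, smul_eq_mul]; ring
    show 0 ≤ cross A B _
    exact this ▸ add_nonneg (mul_nonneg ha hp) (mul_nonneg hb hq)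

lemma cross_eq_zero_of_collinear {A B C : ℝ²} (h : Collinear ℝ {A, B, C}) : cross A B C = 0 := by
  obtain ⟨v, hv⟩ := (collinear_iff_of_mem (by simp : A ∈ ({A, B, C} : Set ℝ²))).1 h
  obtain ⟨s, rfl⟩ := hv B (by simp)
  obtain ⟨t, rfl⟩ := hv C (by simp)
  simp only [cross, vadd_eq_add, PiLp.add_apply, PiLp.smul_apply, smul_eq_mul]
  ring

lemma interior_convexHull_triangle_nonempty {A B C : ℝ²} (h : cross A B C ≠ 0) :
    (interior (convexHull ℝ {A, B, C})).Nonempty := by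
  have hind : AffineIndependent ℝ ![A, B, C] :=
    affineIndependent_iff_not_collinear_set.2 fun hc => h (cross_eq_zero_of_collinear hc)
  have hrange : range ![A, B, C] = {A, B, C} := by
    ext
    simp only [Matrix.range_cons, Matrix.range_empty, mem_union, mem_singleton_iff, union_empty,
      mem_insert_iff]
  rw [interior_convexHull_nonempty_iff_affineSpan_eq_top, ← hrange,
    hind.affineSpan_eq_top_iff_card_eq_finrank_add_one]
  simp

lemma mul_dist_le_cross_of_closedBall_subset {A B C c : ℝ²} {r : ℝ} (hABC : 0 ≤ cross A B C)
    (hr : 0 ≤ r) (h : closedBall c r ⊆ convexHull ℝ {A, B, C}) : r * dist A B ≤ cross A B c := by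
  have hhalf : closedBall c r ⊆ {p | 0 ≤ cross A B p} :=
    h.trans (convexHull_triangle_subset_cross_nonneg hABC)
  rcases (dist_nonneg : 0 ≤ dist A B).eq_or_lt with hL | hL
  · simpa [← hL] using hhalf (mem_closedBall_self hr)
  have hL2 : (B 0 - A 0) ^ 2 + (B 1 - A 1) ^ 2 = dist A B ^ 2 := by rw [dist_comm, dist_sq_fin_two]
  set L := dist A B
  -- `ν` is the outer normal of the side `AB`, of length `L`
  set ν : ℝ² := !₂[B 1 - A 1, A 0 - B 0]
  have hν : ‖ν‖ = L := by
    rw [EuclideanSpace.norm_eq, ← sq_eq_sq₀ (by positivity) hL.le, Real.sq_sqrt (by positivity),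
      ← hL2]
    simp only [ν, Fin.sum_univ_two, Real.norm_eq_abs, sq_abs, Matrix.cons_val_zero,
      Matrix.cons_val_one, Matrix.cons_val_fin_one]
    ring
  have hmem : c + (r / L) • ν ∈ closedBall c r := by
    rw [mem_closedBall, dist_self_add_left, norm_smul, hν, Real.norm_eq_abs,
      abs_of_nonneg (by positivity), div_mul_cancel₀ _ hL.ne']
  have hcross : cross A B (c + (r / L) • ν) = cross A B c - r * L := by
    have : cross A B (c + (r / L) • ν) = cross A B c - r / L * L ^ 2 := by
      simp only [cross, ν, ← hL2, PiLp.add_apply, PiLp.smul_apply, smul_eq_mul,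
        Matrix.cons_val_zero, Matrix.cons_val_one, Matrix.cons_val_fin_one]
      ring
    rw [this]; field_simp
  have : 0 ≤ cross A B (c + (r / L) • ν) := hhalf hmem
  linarith

lemma four_mul_cross_sq (A B C : ℝ²) :
    4 * cross A B C ^ 2 = (dist A B + dist B C + dist C A) * (-dist A B + dist B C + dist C A) *
      (dist A B - dist B C + dist C A) * (dist A B + dist B C - dist C A) := by
  have heron : ∀ a b c : ℝ, (a + b + c) * (-a + b + c) * (a - b + c) * (a + b - c) =
      2 * a ^ 2 * b ^ 2 + 2 * b ^ 2 * c ^ 2 + 2 * c ^ 2 * a ^ 2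
        - (a ^ 2) ^ 2 - (b ^ 2) ^ 2 - (c ^ 2) ^ 2 := by
    intros; ring
  rw [heron, dist_sq_fin_two, dist_sq_fin_two, dist_sq_fin_two]
  unfold cross; ring

lemma cross_sq_le_perimeter_pow_four (A B C : ℝ²) :
    108 * cross A B C ^ 2 ≤ (dist A B + dist B C + dist C A) ^ 4 := by
  have hu : 0 ≤ -dist A B + dist B C + dist C A := by
    linarith [dist_triangle A C B, dist_comm A C, dist_comm C B]
  have hv : 0 ≤ dist A B - dist B C + dist C A := by
    linarith [dist_triangle B A C, dist_comm A B, dist_comm C A]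
  have hw : 0 ≤ dist A B + dist B C - dist C A := by
    linarith [dist_triangle C B A, dist_comm C B, dist_comm B A]
  set u := -dist A B + dist B C + dist C A
  set v := dist A B - dist B C + dist C A
  set w := dist A B + dist B C - dist C A
  have hP : dist A B + dist B C + dist C A = u + v + w := by ring
  have amgm : 27 * (u * v * w) ≤ (u + v + w) ^ 3 := by
    nlinarith [mul_nonneg hu (sq_nonneg (v - w)), mul_nonneg hv (sq_nonneg (u - w)),
      mul_nonneg hw (sq_nonneg (u - v)), mul_nonneg (mul_nonneg hu hv) hw]
  have := mul_le_mul_of_nonneg_left amgm (by positivity : 0 ≤ u + v + w)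
  rw [hP]
  linear_combination (four_mul_cross_sq A B C) * 27 + this

lemma mul_perimeter_le_cross_of_closedBall_subset {A B C c : ℝ²} {r : ℝ} (hABC : 0 ≤ cross A B C)
    (hr : 0 ≤ r) (h : closedBall c r ⊆ convexHull ℝ {A, B, C}) :
    r * (dist A B + dist B C + dist C A) ≤ cross A B C := by
  have hBCA : ({B, C, A} : Set ℝ²) = {A, B, C} := by
    ext; simp only [mem_insert_iff, mem_singleton_iff]; tauto
  have hCAB : ({C, A, B} : Set ℝ²) = {A, B, C} := by
    ext; simp only [mem_insert_iff, mem_singleton_iff]; tauto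
  have hAB := mul_dist_le_cross_of_closedBall_subset hABC hr h
  have hBC := mul_dist_le_cross_of_closedBall_subset (A := B) (B := C) (C := A)
    (by rwa [cross_rotate]) hr (by rwa [hBCA])
  have hCA := mul_dist_le_cross_of_closedBall_subset (A := C) (B := A) (C := B)
    (by rwa [cross_rotate, cross_rotate]) hr (by rwa [hCAB])
  have hsum : cross A B c + cross B C c + cross C A c = cross A B C := by unfold cross; ring
  linarith

lemma six_mul_sqrt_three_mul_sq_le_cross {A B C c : ℝ²} {r : ℝ} (hABC : 0 < cross A B C)
    (hr : 0 ≤ r) (h : closedBall c r ⊆ convexHull ℝ {A, B, C}) :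
    6 * √3 * r ^ 2 ≤ cross A B C := by
  set P := dist A B + dist B C + dist C A
  set X := cross A B C
  have hrP : (r * P) ^ 2 ≤ X ^ 2 :=
    pow_le_pow_left₀ (by positivity) (mul_perimeter_le_cross_of_closedBall_subset hABC.le hr h) 2
  have hiso : 108 * X ^ 2 ≤ P ^ 4 := cross_sq_le_perimeter_pow_four A B C
  have h108 : 108 * r ^ 4 ≤ X ^ 2 := by
    refine le_of_mul_le_mul_right ?_ (by positivity : 0 < X ^ 2)
    calc 108 * r ^ 4 * X ^ 2 = r ^ 4 * (108 * X ^ 2) := by ring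
      _ ≤ r ^ 4 * P ^ 4 := by gcongr
      _ = ((r * P) ^ 2) ^ 2 := by ring
      _ ≤ (X ^ 2) ^ 2 := by gcongr
      _ = X ^ 2 * X ^ 2 := by ring
  rw [← pow_le_pow_iff_left₀ (by positivity) hABC.le two_ne_zero]
  calc (6 * √3 * r ^ 2) ^ 2 = 36 * √3 ^ 2 * r ^ 4 := by ring
    _ = 108 * r ^ 4 := by rw [Real.sq_sqrt zero_le_three]; ring
    _ ≤ X ^ 2 := h108

section inscribedDiameter

variable {s : Set ℝ²} {C : ℝ}

lemma le_sqrt_of_mem_inscribedDiameters (h : ∀ c r, 0 ≤ r → closedBall c r ⊆ s → (2 * r) ^ 2 ≤ C)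
    {d : ℝ} (hd : d ∈ {d : ℝ | 0 ≤ d ∧ ∃ c, closedBall c (d / 2) ⊆ s}) : d ≤ √C := by
  obtain ⟨hd, c, hc⟩ := hd
  have := h c (d / 2) (by positivity) hc
  rw [mul_div_cancel₀ d two_ne_zero] at this
  exact (Real.le_sqrt hd (le_trans (sq_nonneg d) this)).2 this

lemma inscribedDiameter_sq_le (hs : s.Nonempty)
    (h : ∀ c r, 0 ≤ r → closedBall c r ⊆ s → (2 * r) ^ 2 ≤ C) : inscribedDiameter s ^ 2 ≤ C := by
  obtain ⟨p, hp⟩ := hs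
  have hC : 0 ≤ C := by simpa using h p 0 le_rfl (by simpa using hp)
  have hle : inscribedDiameter s ≤ √C :=
    csSup_le ⟨0, le_rfl, p, by simpa using hp⟩ fun d hd => le_sqrt_of_mem_inscribedDiameters h hd
  have h0 : 0 ≤ inscribedDiameter s := Real.sSup_nonneg fun d hd => hd.1
  exact (Real.le_sqrt h0 hC).1 hle

lemma inscribedDiameter_pos (hs : (interior s).Nonempty)
    (h : ∀ c r, 0 ≤ r → closedBall c r ⊆ s → (2 * r) ^ 2 ≤ C) : 0 < inscribedDiameter s := by
  obtain ⟨p, hp⟩ := hs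
  obtain ⟨ε, hε, hball⟩ := nhds_basis_closedBall.mem_iff.1 (mem_interior_iff_mem_nhds.1 hp)
  have hmem : 2 * ε ∈ {d : ℝ | 0 ≤ d ∧ ∃ c, closedBall c (d / 2) ⊆ s} :=
    ⟨by positivity, p, by rwa [mul_div_cancel_left₀ ε two_ne_zero]⟩
  exact (by positivity : 0 < 2 * ε).trans_le
    (le_csSup ⟨√C, fun d hd => le_sqrt_of_mem_inscribedDiameters h hd⟩ hmem)

end inscribedDiameter

lemma inscribedDiameter_triangle {A B C : ℝ²} (h : 0 < cross A B C) :
    0 < inscribedDiameter (convexHull ℝ {A, B, C}) ∧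
      3 * √3 * inscribedDiameter (convexHull ℝ {A, B, C}) ^ 2 ≤ 2 * cross A B C := by
  have h3 : 0 < 3 * √3 := by positivity
  have hball : ∀ c r, 0 ≤ r → closedBall c r ⊆ convexHull ℝ {A, B, C} →
      (2 * r) ^ 2 ≤ 2 * cross A B C / (3 * √3) := by
    intro c r hr hc
    rw [le_div_iff₀ h3]
    linarith [six_mul_sqrt_three_mul_sq_le_cross h hr hc]
  refine ⟨inscribedDiameter_pos (interior_convexHull_triangle_nonempty h.ne') hball, ?_⟩
  rw [← le_div_iff₀' h3]
  exact inscribedDiameter_sq_le ⟨A, subset_convexHull ℝ _ (mem_insert A _)⟩ hball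

lemma iInf_inscribedDiameter_triangles {ι : Type*} [Finite ι] [Nonempty ι] {A B C : ι → ℝ²}
    (h : ∀ i, 0 < cross (A i) (B i) (C i)) :
    0 < ⨅ i, inscribedDiameter (convexHull ℝ {A i, B i, C i}) ∧
      ∀ i, 3 * √3 * (⨅ j, inscribedDiameter (convexHull ℝ {A j, B j, C j})) ^ 2 ≤
        2 * cross (A i) (B i) (C i) := by
  have hT := fun i => inscribedDiameter_triangle (h i)
  obtain ⟨j, hj⟩ := exists_eq_ciInf_of_finite
    (f := fun i => inscribedDiameter (convexHull ℝ {A i, B i, C i}))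
  have hpos : 0 < ⨅ i, inscribedDiameter (convexHull ℝ {A i, B i, C i}) := hj ▸ (hT j).1
  refine ⟨hpos, fun i => le_trans ?_ (hT i).2⟩
  have hle := ciInf_le
    (finite_range fun i => inscribedDiameter (convexHull ℝ {A i, B i, C i})).bddBelow i
  gcongr

lemma cross_le_diam_sq {s : Set ℝ²} (hs : Bornology.IsBounded s) {A B C : ℝ²} (hA : A ∈ s)
    (hB : B ∈ s) (hC : C ∈ s) : cross A B C ≤ diam s ^ 2 :=
  calc cross A B C ≤ dist A B * dist A C := (le_abs_self _).trans (abs_cross_le_dist_mul_dist _ _ _)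
    _ ≤ diam s * diam s :=
      mul_le_mul (dist_le_diam_of_mem hs hA hB) (dist_le_diam_of_mem hs hA hC) dist_nonneg
        diam_nonneg
    _ = diam s ^ 2 := (sq _).symm

/-- The vertices of the reference square `[-1, 1]²`, numbered so that `F_K` maps the `i`-th one
to `Z i`. -/
def squareCorner : Fin 4 → ℝ × ℝ := ![(-1, -1), (1, -1), (1, 1), (-1, 1)]

section affineOnSquare

variable {α β γ : ℝ}

lemma affine_le_of_forall_squareCorner_le {M : ℝ}
    (h : ∀ i, α + β * (squareCorner i).1 + γ * (squareCorner i).2 ≤ M) {p : ℝ × ℝ}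
    (hp : p ∈ Icc (-1 : ℝ) 1 ×ˢ Icc (-1 : ℝ) 1) : α + β * p.1 + γ * p.2 ≤ M := by
  obtain ⟨⟨hξ₀, hξ₁⟩, hη₀, hη₁⟩ := hp
  have h₀ := h 0; have h₁ := h 1; have h₂ := h 2; have h₃ := h 3
  simp only [squareCorner, Fin.isValue, Matrix.cons_val] at h₀ h₁ h₂ h₃
  -- `α + β ξ + γ η` is the average of its corner values with the weights `(1 ± ξ)(1 ± η)/4`
  nlinarith [mul_nonneg (mul_nonneg (sub_nonneg.2 hξ₁) (sub_nonneg.2 hη₁)) (sub_nonneg.2 h₀),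
    mul_nonneg (mul_nonneg (neg_le_iff_add_nonneg.1 hξ₀) (sub_nonneg.2 hη₁)) (sub_nonneg.2 h₁),
    mul_nonneg (mul_nonneg (neg_le_iff_add_nonneg.1 hξ₀) (neg_le_iff_add_nonneg.1 hη₀))
      (sub_nonneg.2 h₂),
    mul_nonneg (mul_nonneg (sub_nonneg.2 hξ₁) (neg_le_iff_add_nonneg.1 hη₀)) (sub_nonneg.2 h₃)]

lemma sSup_affine_image_square_le {M : ℝ}
    (h : ∀ i, α + β * (squareCorner i).1 + γ * (squareCorner i).2 ≤ M) :
    sSup ((fun p : ℝ × ℝ => α + β * p.1 + γ * p.2) '' (Icc (-1 : ℝ) 1 ×ˢ Icc (-1 : ℝ) 1)) ≤ M :=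
  csSup_le ((nonempty_Icc.2 (by norm_num)).prod (nonempty_Icc.2 (by norm_num)) |>.image _)
    (forall_mem_image.2 fun _ hp => affine_le_of_forall_squareCorner_le h hp)

lemma le_sInf_affine_image_square {m : ℝ}
    (h : ∀ i, m ≤ α + β * (squareCorner i).1 + γ * (squareCorner i).2) :
    m ≤ sInf ((fun p : ℝ × ℝ => α + β * p.1 + γ * p.2) '' (Icc (-1 : ℝ) 1 ×ˢ Icc (-1 : ℝ) 1)) :=
  le_csInf ((nonempty_Icc.2 (by norm_num)).prod (nonempty_Icc.2 (by norm_num)) |>.image _)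
    (forall_mem_image.2 fun _ hp => by
      have := affine_le_of_forall_squareCorner_le (α := -α) (β := -β) (γ := -γ) (M := -m)
        (fun i => by linarith [h i]) hp
      linarith)

end affineOnSquare

lemma jacobian_squareCorner (Z : Fin 4 → ℝ²) {a1 a2 a12 b1 b2 b12 : ℝ}
    (ha1 : a1 = (-(Z 0 0) + Z 1 0 + Z 2 0 - Z 3 0) / 4)
    (ha2 : a2 = (-(Z 0 0) - Z 1 0 + Z 2 0 + Z 3 0) / 4)
    (ha12 : a12 = (Z 0 0 - Z 1 0 + Z 2 0 - Z 3 0) / 4)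
    (hb1 : b1 = (-(Z 0 1) + Z 1 1 + Z 2 1 - Z 3 1) / 4)
    (hb2 : b2 = (-(Z 0 1) - Z 1 1 + Z 2 1 + Z 3 1) / 4)
    (hb12 : b12 = (Z 0 1 - Z 1 1 + Z 2 1 - Z 3 1) / 4) (i : Fin 4) :
    (a1 * b2 - a2 * b1) + (a1 * b12 - a12 * b1) * (squareCorner i).1
      + (a12 * b2 - a2 * b12) * (squareCorner i).2 = cross (Z (i - 1)) (Z i) (Z (i + 1)) / 4 := by
  subst ha1 ha2 ha12 hb1 hb2 hb12
  fin_cases i <;> simp [squareCorner, cross, show (-1 : Fin 4) = 3 from rfl] <;> ring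

theorem jacobian_ratio_bound_general
    (Z : Fin 4 → EuclideanSpace ℝ (Fin 2)) (ϱ : ℝ)
    -- the vertices are in convex (counterclockwise) cyclic position
    (hconvex : ∀ i : Fin 4,
      0 < (Z (i+1) 0 - Z i 0) * (Z (i+2) 1 - Z (i+1) 1)
          - (Z (i+1) 1 - Z i 1) * (Z (i+2) 0 - Z (i+1) 0))
    (hK ρK : ℝ)
    (hhK : hK = Metric.diam (convexHull ℝ (Set.range Z)))
    (hρK : ρK = ⨅ i : Fin 4, inscribedDiameter (convexHull ℝ {Z (i-1), Z i, Z (i+1)}))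
    (hreg : hK ≤ ϱ * ρK)
    (a1 a2 a12 b1 b2 b12 : ℝ)
    (ha1 : a1 = (-(Z 0 0) + Z 1 0 + Z 2 0 - Z 3 0) / 4)
    (ha2 : a2 = (-(Z 0 0) - Z 1 0 + Z 2 0 + Z 3 0) / 4)
    (ha12 : a12 = (Z 0 0 - Z 1 0 + Z 2 0 - Z 3 0) / 4)
    (hb1 : b1 = (-(Z 0 1) + Z 1 1 + Z 2 1 - Z 3 1) / 4)
    (hb2 : b2 = (-(Z 0 1) - Z 1 1 + Z 2 1 + Z 3 1) / 4)
    (hb12 : b12 = (Z 0 1 - Z 1 1 + Z 2 1 - Z 3 1) / 4)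
    (J : ℝ → ℝ → ℝ)
    (hJ : ∀ ξ η, J ξ η = (a1 * b2 - a2 * b1) + (a1 * b12 - a12 * b1) * ξ
        + (a12 * b2 - a2 * b12) * η) :
    sSup ((fun p : ℝ × ℝ => J p.1 p.2) '' (Set.Icc (-1 : ℝ) 1 ×ˢ Set.Icc (-1 : ℝ) 1))
      / sInf ((fun p : ℝ × ℝ => J p.1 p.2) '' (Set.Icc (-1 : ℝ) 1 ×ˢ Set.Icc (-1 : ℝ) 1))
      < hK ^ 2 / (2 * ρK ^ 2) ∧ hK ^ 2 / (2 * ρK ^ 2) ≤ ϱ ^ 2 / 2 := by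
  set X : Fin 4 → ℝ := fun i => cross (Z (i - 1)) (Z i) (Z (i + 1))
  have hX : ∀ i, 0 < X i := fun i => by
    have h := hconvex (i - 1)
    rw [sub_add_cancel, show i - 1 + 2 = i + 1 by abel] at h
    exact h.trans_eq (by simp only [X, cross]; ring)
  obtain ⟨hρ, hXρ⟩ : 0 < ρK ∧ ∀ i, 3 * √3 * ρK ^ 2 ≤ 2 * X i := by
    subst hρK; exact iInf_inscribedDiameter_triangles hX
  have hXh : ∀ i, X i ≤ hK ^ 2 := fun i => hhK ▸
    cross_le_diam_sq (isBounded_convexHull.2 (finite_range Z).isBounded)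
      (subset_convexHull ℝ _ (mem_range_self _)) (subset_convexHull ℝ _ (mem_range_self _))
      (subset_convexHull ℝ _ (mem_range_self _))
  have hJX := jacobian_squareCorner Z ha1 ha2 ha12 hb1 hb2 hb12
  simp only [hJ]
  have hsup := sSup_affine_image_square_le fun i =>
    (hJX i).trans_le (by linarith [hXh i] : X i / 4 ≤ hK ^ 2 / 4)
  have hinf := le_sInf_affine_image_square fun i =>
    (by linarith [hXρ i] : 3 * √3 * ρK ^ 2 / 8 ≤ X i / 4).trans (hJX i).ge
  have hK2 : 0 < hK ^ 2 := (hX 0).trans_le (hXh 0)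
  have h4 : 4 < 3 * √3 := by nlinarith [Real.sq_sqrt zero_le_three, Real.sqrt_nonneg 3]
  refine ⟨?_, ?_⟩
  · calc _ ≤ (hK ^ 2 / 4) / (3 * √3 * ρK ^ 2 / 8) :=
          div_le_div₀ (by positivity) hsup (by positivity) hinf
      _ < hK ^ 2 / (2 * ρK ^ 2) := by
          rw [div_lt_div_iff₀ (by positivity) (by positivity)]
          nlinarith [mul_pos hK2 (pow_pos hρ 2)]
  · rw [div_le_div_iff₀ (by positivity) two_pos]
    nlinarith [mul_self_le_mul_self (hhK ▸ diam_nonneg) hreg]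

/-- For a shape-regular convex quadrilateral `K` (with `h_K ≤ ϱ ρ_K`, `ϱ > 2`), the ratio of
the maximum to the minimum of the Jacobian `J_K` over the reference square is bounded by
`h_K²/(2 ρ_K²) ≤ ϱ²/2`. -/
theorem jacobian_ratio_bound
    (Z : Fin 4 → EuclideanSpace ℝ (Fin 2)) (ϱ : ℝ) (hϱ : 2 < ϱ)
    -- the vertices are in convex (counterclockwise) cyclic position
    (hconvex : ∀ i : Fin 4,
      0 < (Z (i+1) 0 - Z i 0) * (Z (i+2) 1 - Z (i+1) 1)
          - (Z (i+1) 1 - Z i 1) * (Z (i+2) 0 - Z (i+1) 0))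
    (hK ρK : ℝ)
    (hhK : hK = Metric.diam (convexHull ℝ (Set.range Z)))
    (hρK : ρK = ⨅ i : Fin 4, inscribedDiameter (convexHull ℝ {Z (i-1), Z i, Z (i+1)}))
    (hreg : hK ≤ ϱ * ρK)
    (a1 a2 a12 b1 b2 b12 : ℝ)
    (ha1 : a1 = (-(Z 0 0) + Z 1 0 + Z 2 0 - Z 3 0) / 4)
    (ha2 : a2 = (-(Z 0 0) - Z 1 0 + Z 2 0 + Z 3 0) / 4)
    (ha12 : a12 = (Z 0 0 - Z 1 0 + Z 2 0 - Z 3 0) / 4)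
    (hb1 : b1 = (-(Z 0 1) + Z 1 1 + Z 2 1 - Z 3 1) / 4)
    (hb2 : b2 = (-(Z 0 1) - Z 1 1 + Z 2 1 + Z 3 1) / 4)
    (hb12 : b12 = (Z 0 1 - Z 1 1 + Z 2 1 - Z 3 1) / 4)
    (J : ℝ → ℝ → ℝ)
    (hJ : ∀ ξ η, J ξ η = (a1 * b2 - a2 * b1) + (a1 * b12 - a12 * b1) * ξ
        + (a12 * b2 - a2 * b12) * η) :
    sSup ((fun p : ℝ × ℝ => J p.1 p.2) '' (Set.Icc (-1 : ℝ) 1 ×ˢ Set.Icc (-1 : ℝ) 1))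
      / sInf ((fun p : ℝ × ℝ => J p.1 p.2) '' (Set.Icc (-1 : ℝ) 1 ×ˢ Set.Icc (-1 : ℝ) 1))
      < hK ^ 2 / (2 * ρK ^ 2) ∧ hK ^ 2 / (2 * ρK ^ 2) ≤ ϱ ^ 2 / 2 :=
  jacobian_ratio_bound_general Z ϱ hconvex hK ρK hhK hρK hreg a1 a2 a12 b1 b2 b12 ha1 ha2 ha12 hb1
    hb2 hb12 J hJ
end

section
/- The 7-parameter stress mode of the 5-node transition element satisfies the modified equilibrium relation: for each of the 7 basis tensors τ̂ in the columns of M_7, the modified divergence vanishes, i.e., b_2 ∂_ξ τ̂_{11} − b_1 ∂_η τ̂_{11} + a_1 ∂_η τ̂_{12} − a_2 ∂_ξ τ̂_{12} = 0 and b_2 ∂_ξ τ̂_{12} − b_1 ∂_η τ̂_{12} + a_1 ∂_η τ̂_{22} − a_2 ∂_ξ τ̂_{22} = 0 on [-1,1]². -/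
/-!
All three stress components are affine in `(ξ, η)`, so their partial derivatives are constant
coefficients. In each equilibrium equation the contribution of `τ̂₁₂` collapses to
`(b₁β₄ - b₂β₆) J₀ / J₀` (resp. `(a₂β₅ - a₁β₇) J₀ / J₀`), which cancels the other two terms
exactly when `J₀ ≠ 0`.
-/

section AffinePartialDeriv

variable {𝕜 : Type*} [NontriviallyNormedField 𝕜] {f : 𝕜 → 𝕜 → 𝕜} {c p q : 𝕜}

theorem deriv_fst_of_affine (hf : ∀ x y, f x y = c + p * x + q * y) (x y : 𝕜) :
    deriv (fun s => f s y) x = p := by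
  have hline : (fun s => f s y) = fun s => (c + q * y) + p * s :=
    funext fun s => by rw [hf]; ring
  rw [hline]
  simp

theorem deriv_snd_of_affine (hf : ∀ x y, f x y = c + p * x + q * y) (x y : 𝕜) :
    deriv (fun t => f x t) y = q :=
  deriv_fst_of_affine (f := fun y x => f x y) (p := q) (q := p)
    (fun y x => by rw [hf]; ring) y x

end AffinePartialDeriv

/-- The 7-parameter stress mode of the 5-node transition element satisfies the modified
equilibrium relation: the modified divergence of the stress vanishes on the reference
square, for every choice of the parameters `β`. -/
theorem transition_stress_mode_equilibrium
    (a1 a2 b1 b2 J0 : ℝ) (hJ0 : J0 = a1 * b2 - a2 * b1) (hJ0ne : J0 ≠ 0)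
    (β : Fin 7 → ℝ)
    (τ11 τ22 τ12 : ℝ → ℝ → ℝ)
    (hτ11 : ∀ ξ η, τ11 ξ η = β 0 + β 3 * η + β 5 * ξ)
    (hτ22 : ∀ ξ η, τ22 ξ η = β 1 + β 4 * ξ + β 6 * η)
    (hτ12 : ∀ ξ η, τ12 ξ η = β 2 + β 3 * ((b1 ^ 2 * ξ + b1 * b2 * η) / J0)
        + β 4 * ((a1 * a2 * ξ + a2 ^ 2 * η) / J0)
        - β 5 * ((b1 * b2 * ξ + b2 ^ 2 * η) / J0)
        - β 6 * ((a1 ^ 2 * ξ + a1 * a2 * η) / J0)) :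
    ∀ ξ ∈ Set.Icc (-1 : ℝ) 1, ∀ η ∈ Set.Icc (-1 : ℝ) 1,
      (b2 * deriv (fun s => τ11 s η) ξ - b1 * deriv (fun t => τ11 ξ t) η
        + a1 * deriv (fun t => τ12 ξ t) η - a2 * deriv (fun s => τ12 s η) ξ = 0) ∧
      (b2 * deriv (fun s => τ12 s η) ξ - b1 * deriv (fun t => τ12 ξ t) η
        + a1 * deriv (fun t => τ22 ξ t) η - a2 * deriv (fun s => τ22 s η) ξ = 0) := by
  intro ξ _ η _
  have h11 : ∀ ξ η, τ11 ξ η = β 0 + β 5 * ξ + β 3 * η := fun ξ η => by rw [hτ11]; ring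
  have h12 : ∀ ξ η, τ12 ξ η = β 2
      + (β 3 * b1 ^ 2 + β 4 * (a1 * a2) - β 5 * (b1 * b2) - β 6 * a1 ^ 2) / J0 * ξ
      + (β 3 * (b1 * b2) + β 4 * a2 ^ 2 - β 5 * b2 ^ 2 - β 6 * (a1 * a2)) / J0 * η :=
    fun ξ η => by rw [hτ12]; ring
  simp only [deriv_fst_of_affine h11, deriv_snd_of_affine h11, deriv_fst_of_affine hτ22,
    deriv_snd_of_affine hτ22, deriv_fst_of_affine h12, deriv_snd_of_affine h12]
  have hunit : J0 * J0⁻¹ = 1 := mul_inv_cancel₀ hJ0ne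
  subst hJ0
  constructor
  · linear_combination (b1 * β 3 - b2 * β 5) * hunit
  · linear_combination (a2 * β 4 - a1 * β 6) * hunit
end

section
/- The 7-parameter stress mode of the 5-node transition element is energy-orthogonal to the internal bubble: for the bubble function b̂(ξ,η) = 1 − (ξ²+η²)/2 on the reference square and any stress τ in the 7-parameter mode, ∫_{[-1,1]²} τ̂ : ε̃(v̂) J_K dξ dη = 0 for v̂ = (c_1 b̂, c_2 b̂), where ε̃ is the modified strain built from the modified partial derivatives with frozen Jacobi matrix at (0,0). -/
/-!
Both the stress components and the modified strains of the bubble are affine in `(ξ, η)` (the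
strains even linear, since `∂_ξ b̂ = -ξ` and `∂_η b̂ = -η`), so the integrand is a quadratic
polynomial. On quadratics the integral over `[-1, 1]²` is given exactly by the five-point rule
with weight `4/3` at the centre and `2/3` at the edge midpoints. The centre contributes nothing,
and the four midpoint values cancel once `J₀ = a₁ b₂ - a₂ b₁` is inserted in the shear mode.
-/

open intervalIntegral

theorem integral_neg_one_one_quadratic (a b c : ℝ) :
    ∫ x in (-1 : ℝ)..1, (a + b * x + c * x ^ 2) = 2 * a + 2 / 3 * c := by
  have hb : IntervalIntegrable (fun x : ℝ => b * x) MeasureTheory.volume (-1) 1 :=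
    (continuous_const.mul continuous_id).intervalIntegrable _ _
  have hc : IntervalIntegrable (fun x : ℝ => c * x ^ 2) MeasureTheory.volume (-1) 1 :=
    (continuous_const.mul (continuous_pow 2)).intervalIntegrable _ _
  rw [integral_add (intervalIntegrable_const.add hb) hc, integral_add intervalIntegrable_const hb,
    integral_const, integral_const_mul, integral_const_mul, integral_id, integral_pow]
  norm_num
  ring

namespace Bivariate

def IsAffine (f : ℝ → ℝ → ℝ) : Prop :=
  ∃ a b c : ℝ, ∀ x y, f x y = a + b * x + c * y

def IsQuadratic (f : ℝ → ℝ → ℝ) : Prop :=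
  ∃ a b c d e k : ℝ, ∀ x y, f x y = a + b * x + c * y + d * (x * y) + e * x ^ 2 + k * y ^ 2

theorem IsAffine.mul {f g : ℝ → ℝ → ℝ} (hf : IsAffine f) (hg : IsAffine g) :
    IsQuadratic fun x y => f x y * g x y := by
  obtain ⟨a, b, c, hf⟩ := hf
  obtain ⟨a', b', c', hg⟩ := hg
  exact ⟨a * a', a * b' + b * a', a * c' + c * a', b * c' + c * b', b * b', c * c',
    fun x y => by simp only [hf, hg]; ring⟩

theorem IsQuadratic.add {f g : ℝ → ℝ → ℝ} (hf : IsQuadratic f) (hg : IsQuadratic g) :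
    IsQuadratic fun x y => f x y + g x y := by
  obtain ⟨a, b, c, d, e, k, hf⟩ := hf
  obtain ⟨a', b', c', d', e', k', hg⟩ := hg
  exact ⟨a + a', b + b', c + c', d + d', e + e', k + k', fun x y => by simp only [hf, hg]; ring⟩

theorem IsQuadratic.integral_square {f : ℝ → ℝ → ℝ} (hf : IsQuadratic f) :
    ∫ x in (-1 : ℝ)..1, ∫ y in (-1 : ℝ)..1, f x y
      = 4 / 3 * f 0 0 + 2 / 3 * (f 1 0 + f (-1) 0 + f 0 1 + f 0 (-1)) := by
  obtain ⟨a, b, c, d, e, k, hf⟩ := hf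
  have inner (x : ℝ) :
      ∫ y in (-1 : ℝ)..1, f x y = (2 * a + 2 / 3 * k) + 2 * b * x + 2 * e * x ^ 2 := by
    rw [integral_congr (g := fun y => (a + b * x + e * x ^ 2) + (c + d * x) * y + k * y ^ 2)
      fun y _ => by simp only [hf]; ring, integral_neg_one_one_quadratic]
    ring
  simp only [inner]
  rw [integral_neg_one_one_quadratic]
  simp only [hf]
  ring

end Bivariate

theorem deriv_bubble_fst (c y x : ℝ) :
    deriv (fun s => c * (1 - (s ^ 2 + y ^ 2) / 2)) x = -(c * x) := by
  have h := ((((hasDerivAt_pow 2 x).add_const (y ^ 2)).div_const 2).const_sub 1).const_mul c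
  exact h.deriv.trans (by ring)

theorem deriv_bubble_snd (c x y : ℝ) :
    deriv (fun t => c * (1 - (x ^ 2 + t ^ 2) / 2)) y = -(c * y) := by
  have h := ((((hasDerivAt_pow 2 y).const_add (x ^ 2)).div_const 2).const_sub 1).const_mul c
  exact h.deriv.trans (by ring)

/-- The 7-parameter stress mode is energy-orthogonal to the internal bubble: for the bubble
`b̂(ξ,η) = 1 - (ξ² + η²)/2` and `v̂ = (c₁ b̂, c₂ b̂)`, the integral over the reference square of
`τ̂ : ε̃(v̂) · J_K` vanishes (by the definition of the modified derivatives, the Jacobian cancels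
and the integrand is expressed through `b2 ∂_ξ û - b1 ∂_η û`, etc.). -/
theorem transition_stress_bubble_orthogonal
    (a1 a2 b1 b2 J0 : ℝ) (hJ0 : J0 = a1 * b2 - a2 * b1) (hJ0ne : J0 ≠ 0)
    (β : Fin 7 → ℝ) (c1 c2 : ℝ)
    (τ11 τ22 τ12 : ℝ → ℝ → ℝ)
    (hτ11 : ∀ ξ η, τ11 ξ η = β 0 + β 3 * η + β 5 * ξ)
    (hτ22 : ∀ ξ η, τ22 ξ η = β 1 + β 4 * ξ + β 6 * η)
    (hτ12 : ∀ ξ η, τ12 ξ η = β 2 + β 3 * ((b1 ^ 2 * ξ + b1 * b2 * η) / J0)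
        + β 4 * ((a1 * a2 * ξ + a2 ^ 2 * η) / J0)
        - β 5 * ((b1 * b2 * ξ + b2 ^ 2 * η) / J0)
        - β 6 * ((a1 ^ 2 * ξ + a1 * a2 * η) / J0))
    (u v : ℝ → ℝ → ℝ)
    (hu : ∀ ξ η, u ξ η = c1 * (1 - (ξ ^ 2 + η ^ 2) / 2))
    (hv : ∀ ξ η, v ξ η = c2 * (1 - (ξ ^ 2 + η ^ 2) / 2)) :
    (∫ ξ in (-1 : ℝ)..1, ∫ η in (-1 : ℝ)..1,
      (τ11 ξ η * (b2 * deriv (fun s => u s η) ξ - b1 * deriv (fun t => u ξ t) η)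
        + τ22 ξ η * (a1 * deriv (fun t => v ξ t) η - a2 * deriv (fun s => v s η) ξ)
        + τ12 ξ η * ((a1 * deriv (fun t => u ξ t) η - a2 * deriv (fun s => u s η) ξ)
            + (b2 * deriv (fun s => v s η) ξ - b1 * deriv (fun t => v ξ t) η)))) = 0 := by
  have hu_fst (ξ η : ℝ) : deriv (fun s => u s η) ξ = -(c1 * ξ) := by
    simp only [hu]; exact deriv_bubble_fst c1 η ξ
  have hu_snd (ξ η : ℝ) : deriv (fun t => u ξ t) η = -(c1 * η) := by
    simp only [hu]; exact deriv_bubble_snd c1 ξ η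
  have hv_fst (ξ η : ℝ) : deriv (fun s => v s η) ξ = -(c2 * ξ) := by
    simp only [hv]; exact deriv_bubble_fst c2 η ξ
  have hv_snd (ξ η : ℝ) : deriv (fun t => v ξ t) η = -(c2 * η) := by
    simp only [hv]; exact deriv_bubble_snd c2 ξ η
  have hτ11_aff : Bivariate.IsAffine τ11 := ⟨β 0, β 5, β 3, fun ξ η => (hτ11 ξ η).trans (by ring)⟩
  have hτ22_aff : Bivariate.IsAffine τ22 := ⟨β 1, β 4, β 6, fun ξ η => (hτ22 ξ η).trans (by ring)⟩
  have hτ12_aff : Bivariate.IsAffine τ12 :=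
    ⟨β 2, (β 3 * b1 ^ 2 + β 4 * (a1 * a2) - β 5 * (b1 * b2) - β 6 * a1 ^ 2) / J0,
      (β 3 * (b1 * b2) + β 4 * a2 ^ 2 - β 5 * b2 ^ 2 - β 6 * (a1 * a2)) / J0,
      fun ξ η => (hτ12 ξ η).trans (by ring)⟩
  rw [Bivariate.IsQuadratic.integral_square]
  · simp only [hu_fst, hu_snd, hv_fst, hv_snd, hτ11, hτ22, hτ12]
    field_simp
    rw [hJ0]
    ring
  · refine ((hτ11_aff.mul ⟨0, -(c1 * b2), c1 * b1, fun ξ η => ?_⟩).add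
      (hτ22_aff.mul ⟨0, c2 * a2, -(c2 * a1), fun ξ η => ?_⟩)).add
      (hτ12_aff.mul ⟨0, c1 * a2 - c2 * b2, c2 * b1 - c1 * a1, fun ξ η => ?_⟩) <;>
    · simp only [hu_fst, hu_snd, hv_fst, hv_snd]; ring
end

section
/- Lemma (element-wise strain bound): For any displacement v in the 5-node transition element space and any quadrilateral K, the squared L² norm of the strain satisfies ‖ε(v)‖²_{0,K} ≤ C (h_K² / min_{(ξ,η)∈K̂} J_K(ξ,η)) Σ_{i=1}^{7} (β_i^v)², where C depends only on the shape-regularity constant. -/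
section TSBhelpers

lemma TSB.sqmul (u t p : ℝ) (hu : u ^ 2 ≤ p) : (u * t) ^ 2 ≤ p * t ^ 2 := by
  nlinarith [mul_nonneg (sub_nonneg.2 hu) (sq_nonneg t)]

lemma TSB.sq2 (w x pw px : ℝ) (hw : w ^ 2 ≤ pw) (hx : x ^ 2 ≤ px) :
    (w + x) ^ 2 ≤ 2 * (pw + px) := by
  nlinarith [sq_nonneg (w - x)]

lemma TSB.sq3 (w x y pw px py : ℝ) (hw : w ^ 2 ≤ pw) (hx : x ^ 2 ≤ px) (hy : y ^ 2 ≤ py) :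
    (w + x + y) ^ 2 ≤ 3 * (pw + px + py) := by
  nlinarith [sq_nonneg (w - x), sq_nonneg (w - y), sq_nonneg (x - y)]

lemma TSB.sq4 (w x y z pw px py pz : ℝ) (hw : w ^ 2 ≤ pw) (hx : x ^ 2 ≤ px)
    (hy : y ^ 2 ≤ py) (hz : z ^ 2 ≤ pz) :
    (w + x + y + z) ^ 2 ≤ 4 * (pw + px + py + pz) := by
  nlinarith [sq_nonneg (w - x), sq_nonneg (w - y), sq_nonneg (w - z),
    sq_nonneg (x - y), sq_nonneg (x - z), sq_nonneg (y - z)]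

lemma TSB.lin (u v t hK : ℝ) (hu : u ^ 2 ≤ hK ^ 2 / 4) (hv : v ^ 2 ≤ hK ^ 2 / 16)
    (ht : t ^ 2 ≤ 1) : (u + v * t) ^ 2 ≤ 4 * hK ^ 2 := by
  nlinarith [sq_nonneg (u - v * t),
    mul_le_mul hv ht (sq_nonneg t) (le_trans (sq_nonneg v) hv), sq_nonneg hK]

lemma TSB.linb (u v t s hK : ℝ) (hu : u ^ 2 ≤ hK ^ 2 / 4) (hv : v ^ 2 ≤ hK ^ 2 / 4)
    (ht : t ^ 2 ≤ 1) (hs : s ^ 2 ≤ 1) : (u * t - v * s) ^ 2 ≤ 4 * hK ^ 2 := by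
  nlinarith [sq_nonneg (u * t + v * s),
    mul_le_mul hu ht (sq_nonneg t) (le_trans (sq_nonneg u) hu),
    mul_le_mul hv hs (sq_nonneg s) (le_trans (sq_nonneg v) hv), sq_nonneg hK]

lemma TSB.cub (u v w ξ η hK : ℝ) (hu : u ^ 2 ≤ hK ^ 2 / 4) (hv : v ^ 2 ≤ hK ^ 2 / 16)
    (hw : w ^ 2 ≤ hK ^ 2 / 4) (hξ : ξ ^ 2 ≤ 1) (hη : η ^ 2 ≤ 1) :
    (u * η ^ 2 - v * ξ * η ^ 2 - 2 * w * ξ * η) ^ 2 ≤ 4 * hK ^ 2 := by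
  have hη4 : (η ^ 2) ^ 2 ≤ 1 := by nlinarith [sq_nonneg η]
  have hx : (u * η ^ 2) ^ 2 ≤ hK ^ 2 / 4 := by
    nlinarith [mul_le_mul hu hη4 (sq_nonneg (η ^ 2)) (le_trans (sq_nonneg u) hu)]
  have hξη4 : (ξ * η ^ 2) ^ 2 ≤ 1 := by
    nlinarith [mul_le_mul hξ hη4 (sq_nonneg (η ^ 2)) (by norm_num : (0:ℝ) ≤ 1)]
  have hy : (v * ξ * η ^ 2) ^ 2 ≤ hK ^ 2 / 16 := by
    nlinarith [mul_le_mul hv hξη4 (sq_nonneg (ξ * η ^ 2)) (le_trans (sq_nonneg v) hv)]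
  have hξη : (ξ * η) ^ 2 ≤ 1 := by
    nlinarith [mul_le_mul hξ hη (sq_nonneg η) (by norm_num : (0:ℝ) ≤ 1)]
  have hz : (2 * w * ξ * η) ^ 2 ≤ hK ^ 2 := by
    nlinarith [mul_le_mul hw hξη (sq_nonneg (ξ * η)) (le_trans (sq_nonneg w) hw)]
  nlinarith [sq_nonneg (u * η ^ 2 + v * ξ * η ^ 2), sq_nonneg (u * η ^ 2 + 2 * w * ξ * η),
    sq_nonneg (v * ξ * η ^ 2 - 2 * w * ξ * η), sq_nonneg hK]

set_option maxHeartbeats 1000000 in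
lemma TSB.numer (a1 a2 a12 b1 b2 b12 hK ξ η B0 B1 B2 B3 B4 B5 B6 : ℝ)
    (h1 : 4 * (a1 ^ 2 + b1 ^ 2) < hK ^ 2) (h2 : 4 * (a2 ^ 2 + b2 ^ 2) < hK ^ 2)
    (h12 : 4 * (a12 ^ 2 + b12 ^ 2) < hK ^ 2 / 4)
    (hξ : ξ ^ 2 ≤ 1) (hη : η ^ 2 ≤ 1) :
    ((b2 + b12 * ξ) * B0 - (b1 + b12 * η) * B1 - (b1 * ξ - b2 * η) * B2
        + (b2 * η ^ 2 - b12 * ξ * η ^ 2 - 2 * b1 * ξ * η) * B5) ^ 2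
      + ((a1 + a12 * η) * B3 + (a1 * ξ - a2 * η) * B4
        + (-(a2 * η ^ 2) + a12 * ξ * η ^ 2 + 2 * a1 * ξ * η) * B6) ^ 2
      + (1/2) * (-(a2 + a12 * ξ) * B0 + (a1 + a12 * η) * B1 + (a1 * ξ - a2 * η) * B2
        - (b1 + b12 * η) * B3 - (b1 * ξ - b2 * η) * B4
        + (-(a2 * η ^ 2) + a12 * ξ * η ^ 2 + 2 * a1 * ξ * η) * B5
        + (b2 * η ^ 2 - b12 * ξ * η ^ 2 - 2 * b1 * ξ * η) * B6) ^ 2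
      ≤ 46 * hK ^ 2 * (B0 ^ 2 + B1 ^ 2 + B2 ^ 2 + B3 ^ 2 + B4 ^ 2 + B5 ^ 2 + B6 ^ 2) := by
  have ha1 : a1 ^ 2 ≤ hK ^ 2 / 4 := by nlinarith [sq_nonneg b1]
  have hb1 : b1 ^ 2 ≤ hK ^ 2 / 4 := by nlinarith [sq_nonneg a1]
  have ha2 : a2 ^ 2 ≤ hK ^ 2 / 4 := by nlinarith [sq_nonneg b2]
  have hb2 : b2 ^ 2 ≤ hK ^ 2 / 4 := by nlinarith [sq_nonneg a2]
  have ha12 : a12 ^ 2 ≤ hK ^ 2 / 16 := by nlinarith [sq_nonneg b12]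
  have hb12 : b12 ^ 2 ≤ hK ^ 2 / 16 := by nlinarith [sq_nonneg a12]
  have hc0 : (b2 + b12 * ξ) ^ 2 ≤ 4 * hK ^ 2 := TSB.lin _ _ _ _ hb2 hb12 hξ
  have hc1 : (b1 + b12 * η) ^ 2 ≤ 4 * hK ^ 2 := TSB.lin _ _ _ _ hb1 hb12 hη
  have hc2 : (b1 * ξ - b2 * η) ^ 2 ≤ 4 * hK ^ 2 := TSB.linb _ _ _ _ _ hb1 hb2 hξ hη
  have hc5 : (b2 * η ^ 2 - b12 * ξ * η ^ 2 - 2 * b1 * ξ * η) ^ 2 ≤ 4 * hK ^ 2 :=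
    TSB.cub _ _ _ _ _ _ hb2 hb12 hb1 hξ hη
  have hd0 : (a2 + a12 * ξ) ^ 2 ≤ 4 * hK ^ 2 := TSB.lin _ _ _ _ ha2 ha12 hξ
  have hd3 : (a1 + a12 * η) ^ 2 ≤ 4 * hK ^ 2 := TSB.lin _ _ _ _ ha1 ha12 hη
  have hd4 : (a1 * ξ - a2 * η) ^ 2 ≤ 4 * hK ^ 2 := TSB.linb _ _ _ _ _ ha1 ha2 hξ hη
  have hd6 : (a2 * η ^ 2 - a12 * ξ * η ^ 2 - 2 * a1 * ξ * η) ^ 2 ≤ 4 * hK ^ 2 :=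
    TSB.cub _ _ _ _ _ _ ha2 ha12 ha1 hξ hη
  -- products with β's
  have p0 : ((b2 + b12 * ξ) * B0) ^ 2 ≤ 4 * hK ^ 2 * B0 ^ 2 := TSB.sqmul _ _ _ hc0
  have p1 : (-((b1 + b12 * η) * B1)) ^ 2 ≤ 4 * hK ^ 2 * B1 ^ 2 := by
    rw [neg_sq]; exact TSB.sqmul _ _ _ hc1
  have p2 : (-((b1 * ξ - b2 * η) * B2)) ^ 2 ≤ 4 * hK ^ 2 * B2 ^ 2 := by
    rw [neg_sq]; exact TSB.sqmul _ _ _ hc2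
  have p5 : ((b2 * η ^ 2 - b12 * ξ * η ^ 2 - 2 * b1 * ξ * η) * B5) ^ 2 ≤ 4 * hK ^ 2 * B5 ^ 2 :=
    TSB.sqmul _ _ _ hc5
  have q3 : ((a1 + a12 * η) * B3) ^ 2 ≤ 4 * hK ^ 2 * B3 ^ 2 := TSB.sqmul _ _ _ hd3
  have q4 : ((a1 * ξ - a2 * η) * B4) ^ 2 ≤ 4 * hK ^ 2 * B4 ^ 2 := TSB.sqmul _ _ _ hd4
  have q6 : (-((a2 * η ^ 2 - a12 * ξ * η ^ 2 - 2 * a1 * ξ * η) * B6)) ^ 2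
      ≤ 4 * hK ^ 2 * B6 ^ 2 := by rw [neg_sq]; exact TSB.sqmul _ _ _ hd6
  have r0 : (-((a2 + a12 * ξ) * B0)) ^ 2 ≤ 4 * hK ^ 2 * B0 ^ 2 := by
    rw [neg_sq]; exact TSB.sqmul _ _ _ hd0
  have r1 : ((a1 + a12 * η) * B1) ^ 2 ≤ 4 * hK ^ 2 * B1 ^ 2 := TSB.sqmul _ _ _ hd3
  have r2 : ((a1 * ξ - a2 * η) * B2) ^ 2 ≤ 4 * hK ^ 2 * B2 ^ 2 := TSB.sqmul _ _ _ hd4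
  have r3 : (-((b1 + b12 * η) * B3)) ^ 2 ≤ 4 * hK ^ 2 * B3 ^ 2 := by
    rw [neg_sq]; exact TSB.sqmul _ _ _ hc1
  have r4 : (-((b1 * ξ - b2 * η) * B4)) ^ 2 ≤ 4 * hK ^ 2 * B4 ^ 2 := by
    rw [neg_sq]; exact TSB.sqmul _ _ _ hc2
  have r5 : (-((a2 * η ^ 2 - a12 * ξ * η ^ 2 - 2 * a1 * ξ * η) * B5)) ^ 2
      ≤ 4 * hK ^ 2 * B5 ^ 2 := by rw [neg_sq]; exact TSB.sqmul _ _ _ hd6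
  have r6 : ((b2 * η ^ 2 - b12 * ξ * η ^ 2 - 2 * b1 * ξ * η) * B6) ^ 2 ≤ 4 * hK ^ 2 * B6 ^ 2 :=
    TSB.sqmul _ _ _ hc5
  have hA : ((b2 + b12 * ξ) * B0 - (b1 + b12 * η) * B1 - (b1 * ξ - b2 * η) * B2
        + (b2 * η ^ 2 - b12 * ξ * η ^ 2 - 2 * b1 * ξ * η) * B5) ^ 2
      ≤ 4 * (4 * hK ^ 2 * B0 ^ 2 + 4 * hK ^ 2 * B1 ^ 2 + 4 * hK ^ 2 * B2 ^ 2
          + 4 * hK ^ 2 * B5 ^ 2) := by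
    calc ((b2 + b12 * ξ) * B0 - (b1 + b12 * η) * B1 - (b1 * ξ - b2 * η) * B2
        + (b2 * η ^ 2 - b12 * ξ * η ^ 2 - 2 * b1 * ξ * η) * B5) ^ 2
        = ((b2 + b12 * ξ) * B0 + -((b1 + b12 * η) * B1) + -((b1 * ξ - b2 * η) * B2)
          + (b2 * η ^ 2 - b12 * ξ * η ^ 2 - 2 * b1 * ξ * η) * B5) ^ 2 := by ring
      _ ≤ _ := TSB.sq4 _ _ _ _ _ _ _ _ p0 p1 p2 p5
  have hB : ((a1 + a12 * η) * B3 + (a1 * ξ - a2 * η) * B4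
        + (-(a2 * η ^ 2) + a12 * ξ * η ^ 2 + 2 * a1 * ξ * η) * B6) ^ 2
      ≤ 3 * (4 * hK ^ 2 * B3 ^ 2 + 4 * hK ^ 2 * B4 ^ 2 + 4 * hK ^ 2 * B6 ^ 2) := by
    calc ((a1 + a12 * η) * B3 + (a1 * ξ - a2 * η) * B4
        + (-(a2 * η ^ 2) + a12 * ξ * η ^ 2 + 2 * a1 * ξ * η) * B6) ^ 2
        = ((a1 + a12 * η) * B3 + (a1 * ξ - a2 * η) * B4
          + -((a2 * η ^ 2 - a12 * ξ * η ^ 2 - 2 * a1 * ξ * η) * B6)) ^ 2 := by ring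
      _ ≤ _ := TSB.sq3 _ _ _ _ _ _ q3 q4 q6
  have hP : (-((a2 + a12 * ξ) * B0) + (a1 + a12 * η) * B1 + (a1 * ξ - a2 * η) * B2
        + -((b1 + b12 * η) * B3)) ^ 2
      ≤ 4 * (4 * hK ^ 2 * B0 ^ 2 + 4 * hK ^ 2 * B1 ^ 2 + 4 * hK ^ 2 * B2 ^ 2
          + 4 * hK ^ 2 * B3 ^ 2) := TSB.sq4 _ _ _ _ _ _ _ _ r0 r1 r2 r3
  have hQ : (-((b1 * ξ - b2 * η) * B4) + -((a2 * η ^ 2 - a12 * ξ * η ^ 2 - 2 * a1 * ξ * η) * B5)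
        + (b2 * η ^ 2 - b12 * ξ * η ^ 2 - 2 * b1 * ξ * η) * B6) ^ 2
      ≤ 3 * (4 * hK ^ 2 * B4 ^ 2 + 4 * hK ^ 2 * B5 ^ 2 + 4 * hK ^ 2 * B6 ^ 2) :=
    TSB.sq3 _ _ _ _ _ _ r4 r5 r6
  have hC : (-(a2 + a12 * ξ) * B0 + (a1 + a12 * η) * B1 + (a1 * ξ - a2 * η) * B2
        - (b1 + b12 * η) * B3 - (b1 * ξ - b2 * η) * B4
        + (-(a2 * η ^ 2) + a12 * ξ * η ^ 2 + 2 * a1 * ξ * η) * B5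
        + (b2 * η ^ 2 - b12 * ξ * η ^ 2 - 2 * b1 * ξ * η) * B6) ^ 2
      ≤ 2 * (4 * (4 * hK ^ 2 * B0 ^ 2 + 4 * hK ^ 2 * B1 ^ 2 + 4 * hK ^ 2 * B2 ^ 2
            + 4 * hK ^ 2 * B3 ^ 2)
          + 3 * (4 * hK ^ 2 * B4 ^ 2 + 4 * hK ^ 2 * B5 ^ 2 + 4 * hK ^ 2 * B6 ^ 2)) := by
    calc (-(a2 + a12 * ξ) * B0 + (a1 + a12 * η) * B1 + (a1 * ξ - a2 * η) * B2
        - (b1 + b12 * η) * B3 - (b1 * ξ - b2 * η) * B4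
        + (-(a2 * η ^ 2) + a12 * ξ * η ^ 2 + 2 * a1 * ξ * η) * B5
        + (b2 * η ^ 2 - b12 * ξ * η ^ 2 - 2 * b1 * ξ * η) * B6) ^ 2
        = ((-((a2 + a12 * ξ) * B0) + (a1 + a12 * η) * B1 + (a1 * ξ - a2 * η) * B2
            + -((b1 + b12 * η) * B3))
          + (-((b1 * ξ - b2 * η) * B4)
            + -((a2 * η ^ 2 - a12 * ξ * η ^ 2 - 2 * a1 * ξ * η) * B5)
            + (b2 * η ^ 2 - b12 * ξ * η ^ 2 - 2 * b1 * ξ * η) * B6)) ^ 2 := by ring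
      _ ≤ _ := TSB.sq2 _ _ _ _ hP hQ
  linarith [hA, hB, hC, mul_nonneg (sq_nonneg hK) (sq_nonneg B0),
    mul_nonneg (sq_nonneg hK) (sq_nonneg B1), mul_nonneg (sq_nonneg hK) (sq_nonneg B2),
    mul_nonneg (sq_nonneg hK) (sq_nonneg B3), mul_nonneg (sq_nonneg hK) (sq_nonneg B4),
    mul_nonneg (sq_nonneg hK) (sq_nonneg B5), mul_nonneg (sq_nonneg hK) (sq_nonneg B6)]

end TSBhelpers

/-- Element-wise strain bound for the 5-node transition element: the squared `L²` norm of the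
strain `ε(v)`, written in reference coordinates (the three squared entries of `J_K ε(v)`
divided by `J_K`), is bounded by `C · h_K²/(min J_K) · Σᵢ (βᵢᵛ)²`, with `C` depending only on
the shape-regularity constant `ϱ`. -/
theorem transition_strain_upper_bound :
    ∀ ϱ : ℝ, 2 < ϱ → ∃ C : ℝ, 0 < C ∧
      ∀ (a1 a2 a12 b1 b2 b12 hK ρK Jmin : ℝ) (β : Fin 7 → ℝ) (J : ℝ → ℝ → ℝ),
        (∀ ξ η, J ξ η = (a1 * b2 - a2 * b1) + (a1 * b12 - a12 * b1) * ξ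
            + (a12 * b2 - a2 * b12) * η) →
        0 < ρK → hK ≤ ϱ * ρK →
        ρK ^ 2 < 4 * (a1 ^ 2 + b1 ^ 2) → 4 * (a1 ^ 2 + b1 ^ 2) < hK ^ 2 →
        ρK ^ 2 < 4 * (a2 ^ 2 + b2 ^ 2) → 4 * (a2 ^ 2 + b2 ^ 2) < hK ^ 2 →
        4 * (a12 ^ 2 + b12 ^ 2) < hK ^ 2 / 4 →
        |b1| ≤ a1 → |a2| ≤ b2 →
        0 < Jmin →
        (∀ ξ ∈ Set.Icc (-1 : ℝ) 1, ∀ η ∈ Set.Icc (-1 : ℝ) 1, Jmin ≤ J ξ η) →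
        (∫ ξ in (-1 : ℝ)..1, ∫ η in (-1 : ℝ)..1,
          (((b2 + b12 * ξ) * β 0 - (b1 + b12 * η) * β 1 - (b1 * ξ - b2 * η) * β 2
              + (b2 * η ^ 2 - b12 * ξ * η ^ 2 - 2 * b1 * ξ * η) * β 5) ^ 2
            + ((a1 + a12 * η) * β 3 + (a1 * ξ - a2 * η) * β 4
              + (-(a2 * η ^ 2) + a12 * ξ * η ^ 2 + 2 * a1 * ξ * η) * β 6) ^ 2
            + (1/2) * (-(a2 + a12 * ξ) * β 0 + (a1 + a12 * η) * β 1 + (a1 * ξ - a2 * η) * β 2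
              - (b1 + b12 * η) * β 3 - (b1 * ξ - b2 * η) * β 4
              + (-(a2 * η ^ 2) + a12 * ξ * η ^ 2 + 2 * a1 * ξ * η) * β 5
              + (b2 * η ^ 2 - b12 * ξ * η ^ 2 - 2 * b1 * ξ * η) * β 6) ^ 2) / J ξ η)
        ≤ C * (hK ^ 2 / Jmin) * ∑ i, (β i) ^ 2 := by
  intro ϱ hϱ
  refine ⟨184, by norm_num, ?_⟩
  intro a1 a2 a12 b1 b2 b12 hK ρK Jmin β J hJdef hρ hhρ hr1 h1 hr2 h2 h12 hb1a1 ha2b2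
    hJminpos hJlow
  have hS' : (∑ i, (β i) ^ 2)
      = β 0 ^ 2 + β 1 ^ 2 + β 2 ^ 2 + β 3 ^ 2 + β 4 ^ 2 + β 5 ^ 2 + β 6 ^ 2 := by
    simp [Fin.sum_univ_seven]
  set S : ℝ := ∑ i, (β i) ^ 2 with hSdef
  have hSnn : 0 ≤ S := by rw [hS']; positivity
  set M : ℝ := 46 * hK ^ 2 * S / Jmin with hM
  have hle : (-1 : ℝ) ≤ 1 := by norm_num
  have hpoint : ∀ ξ ∈ Set.Icc (-1 : ℝ) 1, ∀ η ∈ Set.Icc (-1 : ℝ) 1,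
      ‖(((b2 + b12 * ξ) * β 0 - (b1 + b12 * η) * β 1 - (b1 * ξ - b2 * η) * β 2
              + (b2 * η ^ 2 - b12 * ξ * η ^ 2 - 2 * b1 * ξ * η) * β 5) ^ 2
            + ((a1 + a12 * η) * β 3 + (a1 * ξ - a2 * η) * β 4
              + (-(a2 * η ^ 2) + a12 * ξ * η ^ 2 + 2 * a1 * ξ * η) * β 6) ^ 2
            + (1/2) * (-(a2 + a12 * ξ) * β 0 + (a1 + a12 * η) * β 1 + (a1 * ξ - a2 * η) * β 2
              - (b1 + b12 * η) * β 3 - (b1 * ξ - b2 * η) * β 4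
              + (-(a2 * η ^ 2) + a12 * ξ * η ^ 2 + 2 * a1 * ξ * η) * β 5
              + (b2 * η ^ 2 - b12 * ξ * η ^ 2 - 2 * b1 * ξ * η) * β 6) ^ 2) / J ξ η‖ ≤ M := by
    intro ξ hξ η hη
    obtain ⟨hξl, hξr⟩ := hξ
    obtain ⟨hηl, hηr⟩ := hη
    have hξ2 : ξ ^ 2 ≤ 1 := by nlinarith
    have hη2 : η ^ 2 ≤ 1 := by nlinarith
    have hJ1 : Jmin ≤ J ξ η := hJlow ξ ⟨hξl, hξr⟩ η ⟨hηl, hηr⟩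
    have hJpos : 0 < J ξ η := lt_of_lt_of_le hJminpos hJ1
    have hNnn : 0 ≤ ((b2 + b12 * ξ) * β 0 - (b1 + b12 * η) * β 1 - (b1 * ξ - b2 * η) * β 2
              + (b2 * η ^ 2 - b12 * ξ * η ^ 2 - 2 * b1 * ξ * η) * β 5) ^ 2
            + ((a1 + a12 * η) * β 3 + (a1 * ξ - a2 * η) * β 4
              + (-(a2 * η ^ 2) + a12 * ξ * η ^ 2 + 2 * a1 * ξ * η) * β 6) ^ 2
            + (1/2) * (-(a2 + a12 * ξ) * β 0 + (a1 + a12 * η) * β 1 + (a1 * ξ - a2 * η) * β 2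
              - (b1 + b12 * η) * β 3 - (b1 * ξ - b2 * η) * β 4
              + (-(a2 * η ^ 2) + a12 * ξ * η ^ 2 + 2 * a1 * ξ * η) * β 5
              + (b2 * η ^ 2 - b12 * ξ * η ^ 2 - 2 * b1 * ξ * η) * β 6) ^ 2 := by positivity
    have hnum := TSB.numer a1 a2 a12 b1 b2 b12 hK ξ η (β 0) (β 1) (β 2) (β 3) (β 4) (β 5)
      (β 6) h1 h2 h12 hξ2 hη2
    rw [Real.norm_eq_abs, abs_of_nonneg (div_nonneg hNnn hJpos.le)]
    calc _ ≤ (46 * hK ^ 2 * S) / Jmin := by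
          apply div_le_div₀ (by positivity) _ hJminpos hJ1
          rw [hS']
          exact hnum
      _ = M := rfl
  have hinner : ∀ ξ ∈ Set.uIoc (-1 : ℝ) 1,
      ‖∫ η in (-1 : ℝ)..1,
          (((b2 + b12 * ξ) * β 0 - (b1 + b12 * η) * β 1 - (b1 * ξ - b2 * η) * β 2
              + (b2 * η ^ 2 - b12 * ξ * η ^ 2 - 2 * b1 * ξ * η) * β 5) ^ 2
            + ((a1 + a12 * η) * β 3 + (a1 * ξ - a2 * η) * β 4
              + (-(a2 * η ^ 2) + a12 * ξ * η ^ 2 + 2 * a1 * ξ * η) * β 6) ^ 2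
            + (1/2) * (-(a2 + a12 * ξ) * β 0 + (a1 + a12 * η) * β 1 + (a1 * ξ - a2 * η) * β 2
              - (b1 + b12 * η) * β 3 - (b1 * ξ - b2 * η) * β 4
              + (-(a2 * η ^ 2) + a12 * ξ * η ^ 2 + 2 * a1 * ξ * η) * β 5
              + (b2 * η ^ 2 - b12 * ξ * η ^ 2 - 2 * b1 * ξ * η) * β 6) ^ 2) / J ξ η‖
        ≤ 2 * M := by
    intro ξ hξ
    have hξ' : ξ ∈ Set.Icc (-1 : ℝ) 1 := by
      rw [Set.uIoc_of_le hle] at hξ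
      exact Set.Ioc_subset_Icc_self hξ
    have hb := intervalIntegral.norm_integral_le_of_norm_le_const (C := M)
      (fun η hη => by
        have hη' : η ∈ Set.Icc (-1 : ℝ) 1 := by
          rw [Set.uIoc_of_le hle] at hη
          exact Set.Ioc_subset_Icc_self hη
        exact hpoint ξ hξ' η hη')
    calc _ ≤ M * |(1 : ℝ) - (-1)| := hb
      _ = 2 * M := by norm_num; ring
  have houter := intervalIntegral.norm_integral_le_of_norm_le_const (C := 2 * M) hinner
  calc (∫ ξ in (-1 : ℝ)..1, ∫ η in (-1 : ℝ)..1,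
          (((b2 + b12 * ξ) * β 0 - (b1 + b12 * η) * β 1 - (b1 * ξ - b2 * η) * β 2
              + (b2 * η ^ 2 - b12 * ξ * η ^ 2 - 2 * b1 * ξ * η) * β 5) ^ 2
            + ((a1 + a12 * η) * β 3 + (a1 * ξ - a2 * η) * β 4
              + (-(a2 * η ^ 2) + a12 * ξ * η ^ 2 + 2 * a1 * ξ * η) * β 6) ^ 2
            + (1/2) * (-(a2 + a12 * ξ) * β 0 + (a1 + a12 * η) * β 1 + (a1 * ξ - a2 * η) * β 2
              - (b1 + b12 * η) * β 3 - (b1 * ξ - b2 * η) * β 4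
              + (-(a2 * η ^ 2) + a12 * ξ * η ^ 2 + 2 * a1 * ξ * η) * β 5
              + (b2 * η ^ 2 - b12 * ξ * η ^ 2 - 2 * b1 * ξ * η) * β 6) ^ 2) / J ξ η)
      ≤ ‖∫ ξ in (-1 : ℝ)..1, ∫ η in (-1 : ℝ)..1,
          (((b2 + b12 * ξ) * β 0 - (b1 + b12 * η) * β 1 - (b1 * ξ - b2 * η) * β 2
              + (b2 * η ^ 2 - b12 * ξ * η ^ 2 - 2 * b1 * ξ * η) * β 5) ^ 2
            + ((a1 + a12 * η) * β 3 + (a1 * ξ - a2 * η) * β 4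
              + (-(a2 * η ^ 2) + a12 * ξ * η ^ 2 + 2 * a1 * ξ * η) * β 6) ^ 2
            + (1/2) * (-(a2 + a12 * ξ) * β 0 + (a1 + a12 * η) * β 1 + (a1 * ξ - a2 * η) * β 2
              - (b1 + b12 * η) * β 3 - (b1 * ξ - b2 * η) * β 4
              + (-(a2 * η ^ 2) + a12 * ξ * η ^ 2 + 2 * a1 * ξ * η) * β 5
              + (b2 * η ^ 2 - b12 * ξ * η ^ 2 - 2 * b1 * ξ * η) * β 6) ^ 2) / J ξ η‖ := by
        rw [Real.norm_eq_abs]; exact le_abs_self _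
    _ ≤ 2 * M * |(1 : ℝ) - (-1)| := houter
    _ = 4 * M := by norm_num; ring
    _ = 184 * (hK ^ 2 / Jmin) * S := by rw [hM]; ring
end
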